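/- arXiv:0706.1034 — 4 statements merged into one kernel-verified Lean document; each statement's English description precedes it below -/
import Mathlib

section
/- For all complex numbers z, z' and all Young diagrams μ, λ with m := |μ| ≥ 1 and n := |λ|, one has ∑_{λ• : λ• ↘ λ} (z)_{λ•/λ} (z')_{λ•/λ} · dim(μ, λ•) = ∑_{μ• : μ• ↗ μ} (z)_{μ/μ•} (z')_{μ/μ•} · dim(μ•, λ) + (n + zz' + m)(n − m + 1) · dim(μ, λ). -/
/-- `μ ↗ ν` : the Young diagram `ν` is obtained from `μ` by adding one box. -/
def YoungDiagram.Covers (μ ν : YoungDiagram) : Prop :=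
  μ ≤ ν ∧ ν.card = μ.card + 1

/-- `dim(μ,λ)`: the number of saturated chains `μ = ν₀ ↗ ν₁ ↗ … ↗ ν_{|λ|-|μ|} = λ`
(the number of standard Young tableaux of skew shape `λ/μ`); it vanishes when `μ ⊄ λ`. -/
noncomputable def YoungDiagram.skewDim (μ l : YoungDiagram) : ℕ :=
  Nat.card {f : Fin (l.card - μ.card + 1) → YoungDiagram //
    f 0 = μ ∧ f (Fin.last _) = l ∧
    ∀ i : Fin (l.card - μ.card), YoungDiagram.Covers (f i.castSucc) (f i.succ)}

/-- `(w)_{λ/μ} = ∏_{(i,j) ∈ λ∖μ} (w + j - i)`, the product of `w` shifted by the contents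
of the boxes of the skew diagram `λ/μ`. -/
noncomputable def YoungDiagram.poch (w : ℂ) (μ l : YoungDiagram) : ℂ :=
  ∏ b ∈ l.cells \ μ.cells, (w + (b.2 : ℂ) - (b.1 : ℂ))

/-!
Let `U` add a cell `□` with weight `(z + c(□)) (z' + c(□))`, `c` the content, and let `D` remove
a cell. The left side is the `(μ, λ)` entry of `D^(n-m+1) U` and the first term on the right that
of `U D^(n-m+1)`. On diagrams of size `k` the commutator is `D U - U D = z z' + 2 k`: walks
`μ ↗ ρ ↘ τ` and `μ ↘ π ↗ τ` with `τ ≠ μ` correspond through `ρ = μ ⊔ τ`, `π = μ ⊓ τ`, and the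
closed walks contribute `∑_{addable} f(c) - ∑_{removable} f(c) = f 0 + ∑_{cells} Δ²f(c)` for
`f x = (z + x)(z' + x)` (telescoping along the rows). Moving `U` past the `D`s one at a time, by
induction on `n - m`, collects `∑_{k=m}^{n} (z z' + 2 k) = (n - m + 1)(n + z z' + m)`.
-/

namespace YoungDiagram

instance : DecidableEq YoungDiagram :=
  fun _ _ => decidable_of_iff _ YoungDiagram.ext_iff.symm

lemma eq_of_le_of_card_le {μ ν : YoungDiagram} (h : μ ≤ ν) (hc : ν.card ≤ μ.card) : μ = ν :=
  YoungDiagram.ext (Finset.eq_of_subset_of_card_le (cells_subset_iff.2 h) hc)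

lemma card_sup_add_card_inf (μ ν : YoungDiagram) :
    (μ ⊔ ν).card + (μ ⊓ ν).card = μ.card + ν.card := by
  simp only [YoungDiagram.card, cells_sup, cells_inf]
  exact Finset.card_union_add_card_inter _ _

lemma covers_iff_exists_insert {μ ν : YoungDiagram} :
    Covers μ ν ↔ ∃ c ∉ μ, ν.cells = insert c μ.cells := by
  constructor
  · rintro ⟨hle, hcard⟩
    have hsub : μ.cells ⊆ ν.cells := cells_subset_iff.2 hle
    obtain ⟨c, hc⟩ : ∃ c, ν.cells \ μ.cells = {c} := Finset.card_eq_one.1 (by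
      rw [Finset.card_sdiff_of_subset hsub]; simp only [YoungDiagram.card] at hcard; omega)
    refine ⟨c, fun hcμ => ?_, ?_⟩
    · simpa [hcμ] using (Finset.ext_iff.1 hc c).2
    · rw [← Finset.union_sdiff_of_subset hsub, hc, Finset.union_comm, ← Finset.insert_eq]
  · rintro ⟨c, hc, hν⟩
    refine ⟨cells_subset_iff.1 (hν ▸ Finset.subset_insert _ _), ?_⟩
    simp only [YoungDiagram.card, hν]
    exact Finset.card_insert_of_notMem (by simpa using hc)

lemma Covers.card_eq {μ ν : YoungDiagram} (h : Covers μ ν) : ν.card = μ.card + 1 := h.2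

def AddableRow (μ : YoungDiagram) (i : ℕ) : Prop :=
  i = 0 ∨ μ.rowLen i < μ.rowLen (i - 1)

def RemovableRow (μ : YoungDiagram) (i : ℕ) : Prop :=
  μ.rowLen (i + 1) < μ.rowLen i

instance (μ : YoungDiagram) : DecidablePred μ.AddableRow :=
  fun _ => inferInstanceAs (Decidable (_ ∨ _))

instance (μ : YoungDiagram) : DecidablePred μ.RemovableRow :=
  fun _ => inferInstanceAs (Decidable (_ < _))

def addCell (μ : YoungDiagram) (i : ℕ) : YoungDiagram where
  cells := if μ.AddableRow i then insert (i, μ.rowLen i) μ.cells else μ.cells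
  isLowerSet := by
    split_ifs with h
    · rintro ⟨a, b⟩ ⟨a', b'⟩ ⟨ha : a' ≤ a, hb : b' ≤ b⟩ hc
      simp only [Finset.coe_insert, Set.mem_insert_iff, Prod.mk.injEq, Finset.mem_coe, mem_cells,
        mem_iff_lt_rowLen] at hc ⊢
      have := μ.rowLen_anti _ _ ha
      rcases hc with ⟨rfl, rfl⟩ | hc
      · rcases eq_or_lt_of_le ha with rfl | ha
        · omega
        · rcases h with rfl | h
          · omega
          · have := μ.rowLen_anti a' (a - 1) (by omega)
            omega
      · omega
    · exact μ.isLowerSet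

def removeCell (μ : YoungDiagram) (i : ℕ) : YoungDiagram where
  cells := if μ.RemovableRow i then μ.cells.erase (i, μ.rowLen i - 1) else μ.cells
  isLowerSet := by
    split_ifs with h
    · rintro ⟨a, b⟩ ⟨a', b'⟩ ⟨ha : a' ≤ a, hb : b' ≤ b⟩ hc
      simp only [Finset.coe_erase, Set.mem_sdiff, Set.mem_singleton_iff, Prod.mk.injEq,
        Finset.mem_coe, mem_cells, mem_iff_lt_rowLen] at hc ⊢
      have := μ.rowLen_anti _ _ ha
      unfold RemovableRow at h
      by_cases ha' : a' = i
      · subst ha'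
        rcases eq_or_lt_of_le ha with rfl | ha
        · omega
        · have := μ.rowLen_anti (a' + 1) a ha
          omega
      · omega
    · exact μ.isLowerSet

lemma cells_addCell {μ : YoungDiagram} {i : ℕ} (h : μ.AddableRow i) :
    (μ.addCell i).cells = insert (i, μ.rowLen i) μ.cells :=
  if_pos h

lemma cells_removeCell {μ : YoungDiagram} {i : ℕ} (h : μ.RemovableRow i) :
    (μ.removeCell i).cells = μ.cells.erase (i, μ.rowLen i - 1) :=
  if_pos h

lemma rowLen_notMem (μ : YoungDiagram) (i : ℕ) : (i, μ.rowLen i) ∉ μ := by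
  simp [mem_iff_lt_rowLen]

lemma RemovableRow.mem {μ : YoungDiagram} {i : ℕ} (h : μ.RemovableRow i) :
    (i, μ.rowLen i - 1) ∈ μ := by
  unfold RemovableRow at h
  exact mem_iff_lt_rowLen.2 (by omega)

lemma covers_addCell {μ : YoungDiagram} {i : ℕ} (h : μ.AddableRow i) :
    Covers μ (μ.addCell i) :=
  covers_iff_exists_insert.2 ⟨_, μ.rowLen_notMem i, cells_addCell h⟩

lemma covers_removeCell {μ : YoungDiagram} {i : ℕ} (h : μ.RemovableRow i) :
    Covers (μ.removeCell i) μ := by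
  refine covers_iff_exists_insert.2 ⟨(i, μ.rowLen i - 1), ?_, ?_⟩
  · simp [← mem_cells, cells_removeCell h]
  · rw [cells_removeCell h, Finset.insert_erase ((mem_cells _).2 h.mem)]

lemma Covers.exists_addCell {μ ν : YoungDiagram} (h : Covers μ ν) :
    ∃ i, μ.AddableRow i ∧ μ.addCell i = ν := by
  obtain ⟨⟨i, j⟩, hc, hν⟩ := covers_iff_exists_insert.1 h
  have mem_ν : ∀ d, d ∈ ν ↔ d = (i, j) ∨ d ∈ μ := fun d => by
    rw [← mem_cells, hν, Finset.mem_insert, mem_cells]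
  have hj : j = μ.rowLen i := by
    rw [mem_iff_lt_rowLen] at hc
    by_contra hne
    have := (mem_ν _).1 (ν.up_left_mem le_rfl (Nat.le_of_not_lt hc) ((mem_ν _).2 (.inl rfl)))
    simp [mem_iff_lt_rowLen] at this
    omega
  subst hj
  have hadd : μ.AddableRow i := by
    rcases Nat.eq_zero_or_pos i with hi | hi
    · exact .inl hi
    · have := (mem_ν (i - 1, μ.rowLen i)).1 (ν.up_left_mem (Nat.sub_le i 1) le_rfl
        ((mem_ν _).2 (.inl rfl)))
      simp only [Prod.mk.injEq, mem_iff_lt_rowLen] at this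
      exact .inr (by omega)
  exact ⟨i, hadd, YoungDiagram.ext (by rw [cells_addCell hadd, hν])⟩

lemma Covers.exists_removeCell {κ μ : YoungDiagram} (h : Covers κ μ) :
    ∃ i, μ.RemovableRow i ∧ μ.removeCell i = κ := by
  obtain ⟨⟨i, j⟩, hc, hμ⟩ := covers_iff_exists_insert.1 h
  have mem_μ : ∀ d, d ∈ μ ↔ d = (i, j) ∨ d ∈ κ := fun d => by
    rw [← mem_cells, hμ, Finset.mem_insert, mem_cells]
  have hcμ : (i, j) ∈ μ := (mem_μ _).2 (.inl rfl)
  have below : ∀ d, (i, j) ≤ d → d ∉ μ ∨ d = (i, j) := fun d hd => by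
    by_contra! hd'
    rcases (mem_μ d).1 hd'.1 with h' | h'
    · exact hd'.2 h'
    · exact hc (κ.up_left_mem hd.1 hd.2 h')
  have hj : j + 1 = μ.rowLen i := by
    have := mem_iff_lt_rowLen.1 hcμ
    rcases below (i, j + 1) ⟨le_rfl, Nat.le_succ j⟩ with h' | h'
    · rw [mem_iff_lt_rowLen] at h'; omega
    · simp at h'
  have hrem : μ.RemovableRow i := by
    rcases below (i + 1, j) ⟨Nat.le_succ i, le_rfl⟩ with h' | h'
    · rw [mem_iff_lt_rowLen] at h'; unfold RemovableRow; omega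
    · simp at h'
  refine ⟨i, hrem, YoungDiagram.ext ?_⟩
  rw [cells_removeCell hrem, hμ, ← hj, Nat.add_sub_cancel, Finset.erase_insert (by simpa using hc)]

lemma AddableRow.le_colLen {μ : YoungDiagram} {i : ℕ} (h : μ.AddableRow i) : i ≤ μ.colLen 0 := by
  rcases h with rfl | h
  · exact Nat.zero_le _
  · have := mem_iff_lt_colLen.1 (mem_iff_lt_rowLen.2 (Nat.zero_lt_of_lt h) : (i - 1, 0) ∈ μ)
    omega

lemma RemovableRow.lt_colLen {μ : YoungDiagram} {i : ℕ} (h : μ.RemovableRow i) :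
    i < μ.colLen 0 :=
  mem_iff_lt_colLen.1 (mem_iff_lt_rowLen.2 (Nat.zero_lt_of_lt h))

lemma rowLen_eq_zero {μ : YoungDiagram} {i : ℕ} (h : μ.colLen 0 ≤ i) : μ.rowLen i = 0 := by
  by_contra h'
  have := mem_iff_lt_colLen.1 (mem_iff_lt_rowLen.2 (Nat.pos_of_ne_zero h') : (i, 0) ∈ μ)
  omega

def addableRows (μ : YoungDiagram) : Finset ℕ :=
  (Finset.range (μ.colLen 0 + 1)).filter μ.AddableRow

def removableRows (μ : YoungDiagram) : Finset ℕ :=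
  (Finset.range (μ.colLen 0 + 1)).filter μ.RemovableRow

lemma mem_addableRows {μ : YoungDiagram} {i : ℕ} : i ∈ μ.addableRows ↔ μ.AddableRow i := by
  simpa [addableRows] using fun h => Nat.lt_succ_of_le h.le_colLen

lemma mem_removableRows {μ : YoungDiagram} {i : ℕ} :
    i ∈ μ.removableRows ↔ μ.RemovableRow i := by
  simpa [removableRows] using fun h => Nat.lt_succ_of_lt h.lt_colLen

def succs (μ : YoungDiagram) : Finset YoungDiagram := μ.addableRows.image μ.addCell

def preds (μ : YoungDiagram) : Finset YoungDiagram := μ.removableRows.image μ.removeCell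

lemma mem_succs {μ ν : YoungDiagram} : ν ∈ μ.succs ↔ Covers μ ν := by
  simp only [succs, Finset.mem_image, mem_addableRows]
  exact ⟨fun ⟨_, hi, hν⟩ => hν ▸ covers_addCell hi, Covers.exists_addCell⟩

lemma mem_preds {κ μ : YoungDiagram} : κ ∈ μ.preds ↔ Covers κ μ := by
  simp only [preds, Finset.mem_image, mem_removableRows]
  exact ⟨fun ⟨_, hi, hκ⟩ => hκ ▸ covers_removeCell hi, Covers.exists_removeCell⟩

lemma sum_succs {M : Type*} [AddCommMonoid M] (μ : YoungDiagram) (F : YoungDiagram → M) :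
    ∑ ν ∈ μ.succs, F ν = ∑ i ∈ μ.addableRows, F (μ.addCell i) := by
  refine Finset.sum_image fun i hi j hj hij => ?_
  have := (Finset.ext_iff.1 (congrArg cells hij) (i, μ.rowLen i)).1
  simp only [cells_addCell (mem_addableRows.1 hi), cells_addCell (mem_addableRows.1 hj),
    Finset.mem_insert, Prod.mk.injEq, mem_cells, true_or, forall_const] at this
  exact this.resolve_right (μ.rowLen_notMem i) |>.1

lemma sum_preds {M : Type*} [AddCommMonoid M] (μ : YoungDiagram) (F : YoungDiagram → M) :
    ∑ κ ∈ μ.preds, F κ = ∑ i ∈ μ.removableRows, F (μ.removeCell i) := by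
  refine Finset.sum_image fun i hi j hj hij => ?_
  have hi' := mem_removableRows.1 hi
  have := (Finset.ext_iff.1 (congrArg cells hij) (i, μ.rowLen i - 1)).2
  simp only [cells_removeCell hi', cells_removeCell (mem_removableRows.1 hj),
    Finset.mem_erase, Prod.mk.injEq, mem_cells, ne_eq] at this
  by_contra hne
  exact (this ⟨fun h => hne h.1, hi'.mem⟩).1 trivial

lemma poch_addCell (w : ℂ) {μ : YoungDiagram} {i : ℕ} (h : μ.AddableRow i) :
    poch w μ (μ.addCell i) = w + ((μ.rowLen i : ℤ) - i : ℤ) := by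
  rw [poch, cells_addCell h, Finset.insert_sdiff_cancel (by simpa using μ.rowLen_notMem i),
    Finset.prod_singleton]
  push_cast; ring

lemma poch_removeCell (w : ℂ) {μ : YoungDiagram} {i : ℕ} (h : μ.RemovableRow i) :
    poch w (μ.removeCell i) μ = w + ((μ.rowLen i : ℤ) - 1 - i : ℤ) := by
  rw [poch, cells_removeCell h, Finset.sdiff_erase_self ((mem_cells _).2 h.mem),
    Finset.prod_singleton]
  have : 1 ≤ μ.rowLen i := Nat.one_le_of_lt h
  push_cast [this]; ring

lemma sum_cells_eq_sum_rowLen {M : Type*} [AddCommMonoid M] (μ : YoungDiagram)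
    (h : ℕ × ℕ → M) :
    ∑ c ∈ μ.cells, h c
      = ∑ i ∈ Finset.range (μ.colLen 0), ∑ j ∈ Finset.range (μ.rowLen i), h (i, j) := by
  rw [← Finset.sum_fiberwise_of_maps_to (g := Prod.fst) (t := Finset.range (μ.colLen 0))]
  · refine Finset.sum_congr rfl fun i _ => ?_
    rw [← row, row_eq_prod, Finset.sum_product, Finset.sum_singleton]
  · intro c hc
    have := mem_iff_lt_colLen.1 ((mem_cells c).1 hc)
    exact Finset.mem_range.2 (this.trans_le (μ.colLen_anti 0 c.2 (Nat.zero_le _)))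

def content (c : ℕ × ℕ) : ℤ := c.2 - c.1

lemma sum_addableRows_sub_sum_removableRows_eq {R : Type*} [CommRing R] (μ : YoungDiagram)
    (f : ℤ → R) :
    ∑ i ∈ μ.addableRows, f (μ.rowLen i - i) - ∑ i ∈ μ.removableRows, f (μ.rowLen i - 1 - i)
      = ∑ i ∈ Finset.range (μ.colLen 0), (f (μ.rowLen i - i) - f (μ.rowLen i - i - 1))
        + f (-μ.colLen 0) := by
  set r : ℕ → ℤ := fun i => μ.rowLen i
  let v : ℕ → R := fun i => if μ.AddableRow i then 0 else f (r i - i)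
  -- each row contributes its first difference, up to a telescoping correction
  have row_term : ∀ i, (if μ.AddableRow i then f (r i - i) else 0)
      - (if μ.RemovableRow i then f (r i - 1 - i) else 0)
        = f (r i - i) - f (r i - i - 1) + (v (i + 1) - v i) := by
    intro i
    by_cases hR : μ.RemovableRow i
    · have hA : μ.AddableRow (i + 1) := .inr hR
      by_cases hA' : μ.AddableRow i <;> simp [v, hR, hA, hA'] <;> ring_nf
    · have hr : r (i + 1) = r i := by
        have := μ.rowLen_anti i (i + 1) (Nat.le_succ i)
        simp only [r, RemovableRow] at this hR ⊢; omega
      have hA : ¬ μ.AddableRow (i + 1) := by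
        simp only [AddableRow, r, Nat.add_sub_cancel] at hr ⊢; omega
      by_cases hA' : μ.AddableRow i <;> simp [v, hR, hA, hA', hr] <;> ring_nf
  have hv0 : v 0 = 0 := if_pos (.inl rfl)
  have hN : r (μ.colLen 0) = 0 := by simp [r, rowLen_eq_zero le_rfl]
  have hvN : v (μ.colLen 0 + 1) = f (-(μ.colLen 0 + 1 : ℕ)) := by
    have hN1 : μ.rowLen (μ.colLen 0 + 1) = 0 := rowLen_eq_zero (Nat.le_succ _)
    have : ¬ μ.AddableRow (μ.colLen 0 + 1) := by
      simp only [r, Nat.cast_eq_zero] at hN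
      simp [AddableRow, hN, hN1]
    simp [v, r, this, hN1]
  rw [addableRows, removableRows, Finset.sum_filter, Finset.sum_filter, ← Finset.sum_sub_distrib,
    Finset.sum_congr rfl fun i _ => row_term i, Finset.sum_add_distrib, Finset.sum_range_sub,
    hv0, hvN, Finset.sum_range_succ, hN]
  push_cast; simp only [r]; ring_nf

lemma sum_cells_second_difference {R : Type*} [CommRing R] (μ : YoungDiagram) (f : ℤ → R) :
    ∑ c ∈ μ.cells, (f (content c + 1) - 2 * f (content c) + f (content c - 1))
      = ∑ i ∈ Finset.range (μ.colLen 0), (f (μ.rowLen i - i) - f (μ.rowLen i - i - 1))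
        + f (-μ.colLen 0) - f 0 := by
  let g : ℤ → R := fun x => f x - f (x - 1)
  have rows : ∑ c ∈ μ.cells, (f (content c + 1) - 2 * f (content c) + f (content c - 1))
      = ∑ i ∈ Finset.range (μ.colLen 0), (g (μ.rowLen i - i) - g (-i)) := by
    rw [sum_cells_eq_sum_rowLen]
    refine Finset.sum_congr rfl fun i _ => ?_
    have := Finset.sum_range_sub (fun j : ℕ => g (j - i)) (μ.rowLen i)
    simp only [Nat.cast_zero, zero_sub] at this
    rw [← this]
    refine Finset.sum_congr rfl fun j _ => ?_
    simp only [g, content]; push_cast; ring_nf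
  have first_column : ∑ i ∈ Finset.range (μ.colLen 0), g (-i) = f 0 - f (-μ.colLen 0) := by
    have := Finset.sum_range_sub' (fun i : ℕ => f (-i)) (μ.colLen 0)
    simp only [Nat.cast_zero, neg_zero] at this
    rw [← this]
    refine Finset.sum_congr rfl fun i _ => ?_
    simp only [g]; push_cast; ring_nf
  rw [rows, Finset.sum_sub_distrib (f := fun i => g (μ.rowLen i - i)), first_column]
  ring

theorem sum_addableRows_sub_sum_removableRows {R : Type*} [CommRing R] (μ : YoungDiagram)
    (f : ℤ → R) :
    ∑ i ∈ μ.addableRows, f (μ.rowLen i - i) - ∑ i ∈ μ.removableRows, f (μ.rowLen i - 1 - i)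
      = f 0 + ∑ c ∈ μ.cells, (f (content c + 1) - 2 * f (content c) + f (content c - 1)) := by
  rw [sum_addableRows_sub_sum_removableRows_eq, sum_cells_second_difference]
  ring

theorem sum_succs_poch_mul_poch (z z' : ℂ) (μ : YoungDiagram) :
    ∑ ν ∈ μ.succs, poch z μ ν * poch z' μ ν
      = ∑ κ ∈ μ.preds, poch z κ μ * poch z' κ μ + (z * z' + 2 * μ.card) := by
  have kerov := μ.sum_addableRows_sub_sum_removableRows fun x : ℤ => (z + x) * (z' + x)
  have second_difference : ∀ x : ℤ,
      (z + (x + 1 : ℤ)) * (z' + (x + 1 : ℤ)) - 2 * ((z + x) * (z' + x))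
        + (z + (x - 1 : ℤ)) * (z' + (x - 1 : ℤ)) = 2 := fun x => by push_cast; ring
  simp only [second_difference, Finset.sum_const, nsmul_eq_mul, Int.cast_zero, add_zero] at kerov
  have h_succs : ∑ ν ∈ μ.succs, poch z μ ν * poch z' μ ν
      = ∑ i ∈ μ.addableRows, (z + (μ.rowLen i - i : ℤ)) * (z' + (μ.rowLen i - i : ℤ)) := by
    rw [sum_succs]
    refine Finset.sum_congr rfl fun i hi => ?_
    rw [poch_addCell z (mem_addableRows.1 hi), poch_addCell z' (mem_addableRows.1 hi)]
  have h_preds : ∑ κ ∈ μ.preds, poch z κ μ * poch z' κ μ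
      = ∑ i ∈ μ.removableRows,
          (z + (μ.rowLen i - 1 - i : ℤ)) * (z' + (μ.rowLen i - 1 - i : ℤ)) := by
    rw [sum_preds]
    refine Finset.sum_congr rfl fun i hi => ?_
    rw [poch_removeCell z (mem_removableRows.1 hi), poch_removeCell z' (mem_removableRows.1 hi)]
  rw [h_succs, h_preds]
  linear_combination kerov

lemma covers_sup_iff_covers_inf {μ τ : YoungDiagram} (h : μ.card = τ.card) :
    Covers μ (μ ⊔ τ) ↔ Covers (μ ⊓ τ) μ := by
  have := card_sup_add_card_inf μ τ
  exact ⟨fun h' => ⟨inf_le_left, by have := h'.2; omega⟩,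
    fun h' => ⟨le_sup_left, by have := h'.2; omega⟩⟩

lemma Covers.sup_eq {μ τ ρ : YoungDiagram} (hμ : Covers μ ρ) (hτ : Covers τ ρ) (hne : μ ≠ τ) :
    μ ⊔ τ = ρ := by
  have hcard : μ.card = τ.card := by have := hμ.2; have := hτ.2; omega
  refine eq_of_le_of_card_le (sup_le hμ.1 hτ.1) ?_
  by_contra! hlt
  have hsup := eq_of_le_of_card_le (le_sup_left : μ ≤ μ ⊔ τ) (by have := hμ.2; omega)
  exact hne (eq_of_le_of_card_le (sup_eq_left.1 hsup.symm) hcard.le).symm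

lemma Covers.inf_eq {π μ τ : YoungDiagram} (hμ : Covers π μ) (hτ : Covers π τ) (hne : μ ≠ τ) :
    μ ⊓ τ = π := by
  have hcard : μ.card = τ.card := by have := hμ.2; have := hτ.2; omega
  refine (eq_of_le_of_card_le (le_inf hμ.1 hτ.1) ?_).symm
  by_contra! hlt
  have hinf := eq_of_le_of_card_le (inf_le_left : μ ⊓ τ ≤ μ) (by have := hμ.2; omega)
  exact hne (eq_of_le_of_card_le (inf_eq_left.1 hinf) hcard.ge)

lemma poch_sup_eq_poch_inf (w : ℂ) (μ τ : YoungDiagram) : poch w τ (μ ⊔ τ) = poch w (μ ⊓ τ) μ := by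
  rw [poch, poch, cells_sup, cells_inf, Finset.union_sdiff_right, Finset.sdiff_inter_self_left]

lemma sum_succs_sum_erase_preds (z z' : ℂ) (μ : YoungDiagram) (g : YoungDiagram → ℂ) :
    ∑ ρ ∈ μ.succs, ∑ τ ∈ ρ.preds.erase μ, poch z τ ρ * poch z' τ ρ * g τ
      = ∑ π ∈ μ.preds, ∑ τ ∈ π.succs.erase μ, poch z π μ * poch z' π μ * g τ := by
  rw [Finset.sum_sigma', Finset.sum_sigma']
  refine Finset.sum_bij' (fun p _ => ⟨μ ⊓ p.2, p.2⟩) (fun p _ => ⟨μ ⊔ p.2, p.2⟩) ?_ ?_ ?_ ?_ ?_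
  all_goals simp only [Finset.mem_sigma, Finset.mem_erase, mem_succs, mem_preds]
  · rintro ⟨ρ, τ⟩ ⟨hρ : Covers μ ρ, hτμ : τ ≠ μ, hτ : Covers τ ρ⟩
    have hsup := hρ.sup_eq hτ (Ne.symm hτμ)
    have hcard : μ.card = τ.card := by have := hρ.2; have := hτ.2; omega
    refine ⟨(covers_sup_iff_covers_inf hcard).1 (hsup ▸ hρ), hτμ, ?_⟩
    rw [inf_comm]
    exact (covers_sup_iff_covers_inf hcard.symm).1 (sup_comm μ τ ▸ hsup ▸ hτ)
  · rintro ⟨π, τ⟩ ⟨hπ : Covers π μ, hτμ : τ ≠ μ, hτ : Covers π τ⟩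
    have hinf := hπ.inf_eq hτ (Ne.symm hτμ)
    have hcard : μ.card = τ.card := by have := hπ.2; have := hτ.2; omega
    refine ⟨(covers_sup_iff_covers_inf hcard).2 (hinf ▸ hπ), hτμ, ?_⟩
    rw [sup_comm]
    exact (covers_sup_iff_covers_inf hcard.symm).2 (inf_comm μ τ ▸ hinf ▸ hτ)
  · rintro ⟨ρ, τ⟩ ⟨hρ : Covers μ ρ, hτμ : τ ≠ μ, hτ : Covers τ ρ⟩
    rw [hρ.sup_eq hτ (Ne.symm hτμ)]
  · rintro ⟨π, τ⟩ ⟨hπ : Covers π μ, hτμ : τ ≠ μ, hτ : Covers π τ⟩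
    rw [hπ.inf_eq hτ (Ne.symm hτμ)]
  · rintro ⟨ρ, τ⟩ ⟨hρ : Covers μ ρ, hτμ : τ ≠ μ, hτ : Covers τ ρ⟩
    rw [← hρ.sup_eq hτ (Ne.symm hτμ), poch_sup_eq_poch_inf, poch_sup_eq_poch_inf]

theorem sum_succs_sum_preds (z z' : ℂ) (μ : YoungDiagram) (g : YoungDiagram → ℂ) :
    ∑ ρ ∈ μ.succs, ∑ τ ∈ ρ.preds, poch z τ ρ * poch z' τ ρ * g τ
      = ∑ π ∈ μ.preds, poch z π μ * poch z' π μ * ∑ τ ∈ π.succs, g τ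
        + (z * z' + 2 * μ.card) * g μ := by
  have lhs : ∑ ρ ∈ μ.succs, ∑ τ ∈ ρ.preds, poch z τ ρ * poch z' τ ρ * g τ
      = (∑ ρ ∈ μ.succs, poch z μ ρ * poch z' μ ρ) * g μ
        + ∑ ρ ∈ μ.succs, ∑ τ ∈ ρ.preds.erase μ, poch z τ ρ * poch z' τ ρ * g τ := by
    rw [Finset.sum_mul, ← Finset.sum_add_distrib]
    exact Finset.sum_congr rfl fun ρ hρ =>
      (Finset.add_sum_erase _ _ (mem_preds.2 (mem_succs.1 hρ))).symm
  have rhs : ∑ π ∈ μ.preds, poch z π μ * poch z' π μ * ∑ τ ∈ π.succs, g τ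
      = (∑ π ∈ μ.preds, poch z π μ * poch z' π μ) * g μ
        + ∑ π ∈ μ.preds, ∑ τ ∈ π.succs.erase μ, poch z π μ * poch z' π μ * g τ := by
    rw [Finset.sum_mul, ← Finset.sum_add_distrib]
    refine Finset.sum_congr rfl fun π hπ => ?_
    rw [← Finset.add_sum_erase _ _ (mem_succs.2 (mem_preds.1 hπ)), mul_add, Finset.mul_sum]
  rw [lhs, rhs, sum_succs_sum_erase_preds, sum_succs_poch_mul_poch]
  ring

def Chain (k : ℕ) (μ l : YoungDiagram) : Type :=
  {f : Fin (k + 1) → YoungDiagram //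
    f 0 = μ ∧ f (Fin.last k) = l ∧ ∀ i : Fin k, Covers (f i.castSucc) (f i.succ)}

def chainSuccEquiv (k : ℕ) (μ l : YoungDiagram) :
    Chain (k + 1) μ l ≃ Σ σ : μ.succs, Chain k σ l where
  toFun f := ⟨⟨Fin.tail f.1 0, mem_succs.2 (by
      have := f.2.2.2 0
      rwa [Fin.castSucc_zero, f.2.1] at this)⟩,
    ⟨Fin.tail f.1, rfl, f.2.2.1, fun i => f.2.2.2 i.succ⟩⟩
  invFun p := by
    refine ⟨Fin.cons μ p.2.1, Fin.cons_zero _ _, p.2.2.2.1, fun i => ?_⟩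
    induction i using Fin.cases with
    | zero =>
      rw [Fin.castSucc_zero, Fin.cons_zero, Fin.cons_succ, p.2.2.1]
      exact mem_succs.1 p.1.2
    | succ i =>
      rw [← Fin.succ_castSucc, Fin.cons_succ, Fin.cons_succ]
      exact p.2.2.2.2 i
  left_inv f := Subtype.ext (by simp only [← f.2.1, Fin.cons_self_tail])
  right_inv p := Sigma.subtype_ext (Subtype.ext (by simp [p.2.2.1])) (by simp)

instance (k : ℕ) (μ l : YoungDiagram) : Finite (Chain k μ l) := by
  induction k generalizing μ with
  | zero =>
    refine @Finite.of_subsingleton _ ⟨fun f g => Subtype.ext (funext fun i => ?_)⟩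
    rw [Fin.fin_one_eq_zero i, f.2.1, g.2.1]
  | succ k ih => exact Finite.of_equiv _ (chainSuccEquiv k μ l).symm

lemma card_chain_zero (μ l : YoungDiagram) :
    Nat.card (Chain 0 μ l) = if μ = l then 1 else 0 := by
  split_ifs with h
  · subst h
    refine Nat.card_eq_one_iff_exists.2 ⟨⟨fun _ => μ, rfl, rfl, Fin.elim0⟩, fun f => ?_⟩
    exact Subtype.ext (funext fun i => by rw [Fin.fin_one_eq_zero i, f.2.1])
  · have : IsEmpty (Chain 0 μ l) := ⟨fun f => h (f.2.1.symm.trans f.2.2.1)⟩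
    exact Nat.card_of_isEmpty

lemma card_chain_succ (k : ℕ) (μ l : YoungDiagram) :
    Nat.card (Chain (k + 1) μ l) = ∑ σ ∈ μ.succs, Nat.card (Chain k σ l) := by
  rw [Nat.card_congr (chainSuccEquiv k μ l), Nat.card_sigma,
    Finset.sum_coe_sort μ.succs fun σ => Nat.card (Chain k σ l)]

lemma skewDim_eq_card_chain (μ l : YoungDiagram) :
    μ.skewDim l = Nat.card (Chain (l.card - μ.card) μ l) := rfl

lemma skewDim_of_card_le {μ l : YoungDiagram} (h : l.card ≤ μ.card) :
    μ.skewDim l = if μ = l then 1 else 0 := by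
  rw [skewDim_eq_card_chain, Nat.sub_eq_zero_of_le h, card_chain_zero]

lemma sum_succs_skewDim {μ l : YoungDiagram} (h : μ ≠ l) :
    ∑ σ ∈ μ.succs, σ.skewDim l = μ.skewDim l := by
  rcases lt_or_ge μ.card l.card with hlt | hle
  · obtain ⟨k, hk⟩ : ∃ k, l.card - μ.card = k + 1 := ⟨l.card - μ.card - 1, by omega⟩
    rw [skewDim_eq_card_chain μ, hk, card_chain_succ]
    refine Finset.sum_congr rfl fun σ hσ => ?_
    rw [skewDim_eq_card_chain, (mem_succs.1 hσ).card_eq, show l.card - (μ.card + 1) = k by omega]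
  · rw [skewDim_of_card_le hle, if_neg h]
    refine Finset.sum_eq_zero fun σ hσ => ?_
    have := (mem_succs.1 hσ).card_eq
    rw [skewDim_of_card_le (by omega), if_neg (by rintro rfl; omega)]

lemma sum_succs_poch_mul_skewDim_of_card_lt {μ l : YoungDiagram} (z z' : ℂ)
    (h : l.card < μ.card) :
    ∑ ν ∈ l.succs, poch z l ν * poch z' l ν * (μ.skewDim ν : ℂ)
      = ∑ κ ∈ μ.preds, poch z κ μ * poch z' κ μ * (κ.skewDim l : ℂ) := by
  have lhs : ∀ ν ∈ l.succs, poch z l ν * poch z' l ν * (μ.skewDim ν : ℂ)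
      = if μ = ν then poch z l μ * poch z' l μ else 0 := fun ν hν => by
    rw [skewDim_of_card_le (by have := (mem_succs.1 hν).card_eq; omega)]
    split_ifs with hμν <;> simp [hμν]
  have rhs : ∀ κ ∈ μ.preds, poch z κ μ * poch z' κ μ * (κ.skewDim l : ℂ)
      = if κ = l then poch z l μ * poch z' l μ else 0 := fun κ hκ => by
    rw [skewDim_of_card_le (by have := (mem_preds.1 hκ).card_eq; omega)]
    split_ifs with hκl <;> simp [hκl]
  rw [Finset.sum_congr rfl lhs, Finset.sum_congr rfl rhs, Finset.sum_ite_eq, Finset.sum_ite_eq']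
  exact if_congr (mem_succs.trans mem_preds.symm) rfl rfl

theorem sum_succs_poch_mul_skewDim (z z' : ℂ) (μ l : YoungDiagram) :
    ∑ ν ∈ l.succs, poch z l ν * poch z' l ν * (μ.skewDim ν : ℂ)
      = ∑ κ ∈ μ.preds, poch z κ μ * poch z' κ μ * (κ.skewDim l : ℂ)
        + ((l.card : ℂ) + z * z' + μ.card) * ((l.card : ℂ) - μ.card + 1) * (μ.skewDim l : ℂ) := by
  obtain ⟨d, hd⟩ : ∃ d, l.card + 1 - μ.card = d := ⟨_, rfl⟩
  induction d generalizing μ with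
  | zero =>
    rw [sum_succs_poch_mul_skewDim_of_card_lt z z' (by omega),
      skewDim_of_card_le (μ := μ) (by omega), if_neg (by rintro rfl; omega), Nat.cast_zero,
      mul_zero, add_zero]
  | succ d ih =>
    have expand : ∀ ν ∈ l.succs, (μ.skewDim ν : ℂ) = ∑ ρ ∈ μ.succs, (ρ.skewDim ν : ℂ) :=
      fun ν hν => by
        rw [← sum_succs_skewDim (by rintro rfl; have := (mem_succs.1 hν).card_eq; omega),
          Nat.cast_sum]
    have step : ∀ ρ ∈ μ.succs, ∑ ν ∈ l.succs, poch z l ν * poch z' l ν * (ρ.skewDim ν : ℂ)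
        = ∑ τ ∈ ρ.preds, poch z τ ρ * poch z' τ ρ * (τ.skewDim l : ℂ)
          + ((l.card : ℂ) + z * z' + (μ.card + 1)) * ((l.card : ℂ) - μ.card) * (ρ.skewDim l : ℂ) :=
      fun ρ hρ => by
        have hcard := (mem_succs.1 hρ).card_eq
        rw [ih ρ (by omega), hcard]
        push_cast; ring
    have down : ∀ π ∈ μ.preds, ∑ τ ∈ π.succs, (τ.skewDim l : ℂ) = π.skewDim l := fun π hπ => by
      have := (mem_preds.1 hπ).card_eq
      rw [← Nat.cast_sum, sum_succs_skewDim (by rintro rfl; omega)]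
    have up : ((l.card : ℂ) - μ.card) * ∑ ρ ∈ μ.succs, (ρ.skewDim l : ℂ)
        = ((l.card : ℂ) - μ.card) * μ.skewDim l := by
      rcases eq_or_ne μ l with rfl | hne
      · simp
      · rw [← Nat.cast_sum, sum_succs_skewDim hne]
    calc ∑ ν ∈ l.succs, poch z l ν * poch z' l ν * (μ.skewDim ν : ℂ)
        = ∑ ρ ∈ μ.succs, ∑ ν ∈ l.succs, poch z l ν * poch z' l ν * (ρ.skewDim ν : ℂ) := by
          rw [Finset.sum_comm]
          exact Finset.sum_congr rfl fun ν hν => by rw [expand ν hν, Finset.mul_sum]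
      _ = ∑ ρ ∈ μ.succs, ∑ τ ∈ ρ.preds, poch z τ ρ * poch z' τ ρ * (τ.skewDim l : ℂ)
          + ((l.card : ℂ) + z * z' + (μ.card + 1)) * ((l.card : ℂ) - μ.card)
            * ∑ ρ ∈ μ.succs, (ρ.skewDim l : ℂ) := by
          rw [Finset.sum_congr rfl step, Finset.sum_add_distrib, Finset.mul_sum]
      _ = _ := by
          rw [sum_succs_sum_preds, Finset.sum_congr rfl fun π hπ => by rw [down π hπ]]
          linear_combination ((l.card : ℂ) + z * z' + (μ.card + 1)) * up

end YoungDiagram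

open YoungDiagram in
theorem updown_combinatorial_identity_general (z z' : ℂ) (μ l : YoungDiagram) (m n : ℕ)
    (hm : μ.card = m) (hn : l.card = n) :
    ∑ᶠ (ν : YoungDiagram) (_ : Covers l ν),
        poch z l ν * poch z' l ν * (μ.skewDim ν : ℂ)
      = (∑ᶠ (κ : YoungDiagram) (_ : Covers κ μ),
            poch z κ μ * poch z' κ μ * (κ.skewDim l : ℂ))
        + ((n : ℂ) + z * z' + (m : ℂ)) * ((n : ℂ) - (m : ℂ) + 1) * (μ.skewDim l : ℂ) := by
  subst hm hn
  rw [finsum_cond_eq_sum_of_cond_iff _ fun _ => mem_succs.symm,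
    finsum_cond_eq_sum_of_cond_iff _ fun _ => mem_preds.symm]
  exact sum_succs_poch_mul_skewDim z z' μ l

open YoungDiagram in
/-- The combinatorial identity (4.3): for all `z, z' ∈ ℂ` and Young
diagrams `μ, λ` with `m = |μ| ≥ 1`, `n = |λ|`:
`∑_{λ• ↘ λ} (z)_{λ•/λ}(z')_{λ•/λ} dim(μ,λ•)
  = ∑_{μ• ↗ μ} (z)_{μ/μ•}(z')_{μ/μ•} dim(μ•,λ) + (n + zz' + m)(n - m + 1) dim(μ,λ)`. -/
theorem updown_combinatorial_identity (z z' : ℂ) (μ l : YoungDiagram) (m n : ℕ)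
    (hm : μ.card = m) (hm1 : 1 ≤ m) (hn : l.card = n) :
    ∑ᶠ (ν : YoungDiagram) (_ : Covers l ν),
        poch z l ν * poch z' l ν * (μ.skewDim ν : ℂ)
      = (∑ᶠ (κ : YoungDiagram) (_ : Covers κ μ),
            poch z κ μ * poch z' κ μ * (κ.skewDim l : ℂ))
        + ((n : ℂ) + z * z' + (m : ℂ)) * ((n : ℂ) - (m : ℂ) + 1) * (μ.skewDim l : ℂ) :=
  updown_combinatorial_identity_general z z' μ l m n hm hn
end

section
/- For all real parameters c, s: if f is a monomial in R = ℝ[q_1, q_2, …] of weighted degree m (where the indeterminate q_i is assigned weight i+1), then A f + m(m−1+c)·f is a polynomial of weighted degree strictly less than m. In particular, for every m the operator A maps the subspace of polynomials of weighted degree ≤ m into itself. -/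
open MvPolynomial

/-- The moment coordinates: `qv i` is the indeterminate `q_i` for `i ≥ 1`, with the
convention `q_0 = 1`. -/
noncomputable def qv (i : ℕ) : MvPolynomial ℕ+ ℝ :=
  if h : 0 < i then X (⟨i, h⟩ : ℕ+) else 1

/-- The differential operator
`A = ∑_{i,j≥1} (i+1)(j+1)(q_{i+j} - q_i q_j) ∂²/∂q_i∂q_j
    - c ∑_{i≥1} (i+1) q_i ∂/∂q_i + s ∑_{i≥1} (i+1) q_{i-1} ∂/∂q_i
    + ∑_{i,j≥0} (i+j+3) q_i q_j ∂/∂q_{i+j+2} - ∑_{i≥1} i(i+1) q_i ∂/∂q_i`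
on `ℝ[q_1, q_2, …]`; on any given polynomial only finitely many summands are nonzero. -/
noncomputable def Afun (c s : ℝ) (f : MvPolynomial ℕ+ ℝ) : MvPolynomial ℕ+ ℝ :=
  (∑ᶠ p : ℕ+ × ℕ+,
      ((((p.1 : ℕ) : ℝ) + 1) * (((p.2 : ℕ) : ℝ) + 1)) •
        ((qv ((p.1 : ℕ) + (p.2 : ℕ)) - qv (p.1 : ℕ) * qv (p.2 : ℕ)) *
          pderiv p.1 (pderiv p.2 f)))
    - c • (∑ᶠ i : ℕ+, (((i : ℕ) : ℝ) + 1) • (qv (i : ℕ) * pderiv i f))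
    + s • (∑ᶠ i : ℕ+, (((i : ℕ) : ℝ) + 1) • (qv ((i : ℕ) - 1) * pderiv i f))
    + (∑ᶠ p : ℕ × ℕ,
        ((p.1 : ℝ) + (p.2 : ℝ) + 3) •
          (qv p.1 * qv p.2 * pderiv ((p.1 + p.2 + 2).toPNat (by omega)) f))
    - (∑ᶠ i : ℕ+, (((i : ℕ) : ℝ) * (((i : ℕ) : ℝ) + 1)) • (qv (i : ℕ) * pderiv i f))

/-- The weighted degree of a monomial exponent `d`, where the indeterminate `q_i` is
assigned weight `i + 1`. -/
def wdeg (d : ℕ+ →₀ ℕ) : ℕ :=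
  ∑ i ∈ d.support, d i * ((i : ℕ) + 1)

/-!
Every summand of `A` multiplies a product of derivatives `∂_i` (each of weight `i + 1`) by a
monomial in the `q`'s whose weight is at most the total weight of the derivatives. The summands
where that weight is strictly smaller lower the weighted degree. The remaining ones, `q_i ∂_i`
and `q_i q_j ∂_i ∂_j`, are Euler-type operators acting diagonally on a monomial `q^d`: with
`W = ∑ (i+1) d_i = wdeg d` and `Q = ∑ (i+1)² d_i` they contribute the eigenvalue
`-(W² - Q) - c W - (Q - W) = -W (W - 1 + c)`.
-/

lemma wdeg_eq_weight (d : ℕ+ →₀ ℕ) :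
    wdeg d = Finsupp.weight (fun i : ℕ+ => (i : ℕ) + 1) d :=
  rfl

lemma wdeg_add (a b : ℕ+ →₀ ℕ) : wdeg (a + b) = wdeg a + wdeg b := by
  simp only [wdeg_eq_weight, map_add]

lemma wdeg_single_one (i : ℕ+) : wdeg (Finsupp.single i 1) = (i : ℕ) + 1 := by
  simp [wdeg_eq_weight, Finsupp.weight_single]

lemma cast_wdeg (d : ℕ+ →₀ ℕ) :
    (wdeg d : ℝ) = ∑ i ∈ d.support, (((i : ℕ) : ℝ) + 1) * d i := by
  simp only [wdeg, Nat.cast_sum, Nat.cast_mul, Nat.cast_add, Nat.cast_one, mul_comm]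

/-- The bound is an integer so that lowering it by the weight of a derivative involves no
truncated subtraction. -/
noncomputable def wdegLE (n : ℤ) : Submodule ℝ (MvPolynomial ℕ+ ℝ) :=
  restrictSupport ℝ {e | (wdeg e : ℤ) ≤ n}

lemma mem_wdegLE {n : ℤ} {f : MvPolynomial ℕ+ ℝ} :
    f ∈ wdegLE n ↔ ∀ e ∈ f.support, (wdeg e : ℤ) ≤ n :=
  Iff.rfl

lemma wdegLE_mono {m n : ℤ} (h : m ≤ n) : wdegLE m ≤ wdegLE n :=
  restrictSupport_mono ℝ fun _ he => le_trans he h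

lemma monomial_mem_wdegLE (d : ℕ+ →₀ ℕ) (r : ℝ) : monomial d r ∈ wdegLE (wdeg d) :=
  (monomial_mem_restrictSupport ℝ).mpr (Or.inl (Set.mem_ofPred.mpr le_rfl))

lemma mul_mem_wdegLE {m n : ℤ} {f g : MvPolynomial ℕ+ ℝ} (hf : f ∈ wdegLE m)
    (hg : g ∈ wdegLE n) : f * g ∈ wdegLE (m + n) := by
  classical
  rw [mem_wdegLE] at *
  intro e he
  obtain ⟨a, ha, b, hb, rfl⟩ := Finset.mem_add.mp (support_mul f g he)
  have := hf _ ha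
  have := hg _ hb
  simp only [wdeg_add, Nat.cast_add] at *
  omega

lemma pderiv_mem_wdegLE {n : ℤ} {f : MvPolynomial ℕ+ ℝ} (i : ℕ+) (hf : f ∈ wdegLE n) :
    pderiv i f ∈ wdegLE (n - ((i : ℕ) + 1)) := by
  rw [mem_wdegLE] at *
  intro e he
  have hmem : e + Finsupp.single i 1 ∈ f.support := by
    rw [mem_support_iff, coeff_pderiv] at he
    exact mem_support_iff.mpr (left_ne_zero_of_mul he)
  have := hf _ hmem
  simp only [wdeg_add, wdeg_single_one, Nat.cast_add, Nat.cast_one] at *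
  omega

lemma qv_mem_wdegLE (k : ℕ) : qv k ∈ wdegLE (k + 1) := by
  unfold qv
  split_ifs with hk
  · refine wdegLE_mono (le_of_eq ?_) (monomial_mem_wdegLE _ 1)
    exact_mod_cast wdeg_single_one ⟨k, hk⟩
  · refine wdegLE_mono ?_ (monomial_mem_wdegLE 0 1)
    rw [wdeg_eq_weight, map_zero]
    omega

lemma finsum_mem_submodule {ι R M : Type*} [Semiring R] [AddCommMonoid M] [Module R M]
    (V : Submodule R M) {F : ι → M} (h : ∀ i, F i ∈ V) : ∑ᶠ i, F i ∈ V :=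
  finsum_induction (· ∈ V) V.zero_mem (fun _ _ => V.add_mem) h

section Summands

variable {n : ℤ} {f : MvPolynomial ℕ+ ℝ}

lemma qv_mul_pderiv_mem (i : ℕ+) (hf : f ∈ wdegLE n) :
    qv (i : ℕ) * pderiv i f ∈ wdegLE n :=
  wdegLE_mono (by omega) (mul_mem_wdegLE (qv_mem_wdegLE _) (pderiv_mem_wdegLE i hf))

lemma qv_mul_qv_mul_pderiv_pderiv_mem (i j : ℕ+) (hf : f ∈ wdegLE n) :
    qv (i : ℕ) * qv (j : ℕ) * pderiv i (pderiv j f) ∈ wdegLE n :=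
  wdegLE_mono (by omega) (mul_mem_wdegLE (mul_mem_wdegLE (qv_mem_wdegLE _) (qv_mem_wdegLE _))
    (pderiv_mem_wdegLE i (pderiv_mem_wdegLE j hf)))

lemma qv_add_mul_pderiv_pderiv_mem (i j : ℕ+) (hf : f ∈ wdegLE n) :
    qv ((i : ℕ) + (j : ℕ)) * pderiv i (pderiv j f) ∈ wdegLE (n - 1) :=
  wdegLE_mono (by push_cast; omega)
    (mul_mem_wdegLE (qv_mem_wdegLE _) (pderiv_mem_wdegLE i (pderiv_mem_wdegLE j hf)))

lemma qv_sub_one_mul_pderiv_mem (i : ℕ+) (hf : f ∈ wdegLE n) :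
    qv ((i : ℕ) - 1) * pderiv i f ∈ wdegLE (n - 1) :=
  wdegLE_mono (by have := i.pos; omega)
    (mul_mem_wdegLE (qv_mem_wdegLE _) (pderiv_mem_wdegLE i hf))

lemma qv_mul_qv_mul_pderiv_mem (a b : ℕ) (hf : f ∈ wdegLE n) :
    qv a * qv b * pderiv ((a + b + 2).toPNat (by omega)) f ∈ wdegLE (n - 1) :=
  wdegLE_mono (by simp only [Nat.toPNat, PNat.mk_coe]; push_cast; omega)
    (mul_mem_wdegLE (mul_mem_wdegLE (qv_mem_wdegLE a) (qv_mem_wdegLE b))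
      (pderiv_mem_wdegLE _ hf))

end Summands

theorem Afun_mem_wdegLE (c s : ℝ) {n : ℤ} {f : MvPolynomial ℕ+ ℝ} (hf : f ∈ wdegLE n) :
    Afun c s f ∈ wdegLE n := by
  have hlower : wdegLE (n - 1) ≤ wdegLE n := wdegLE_mono (by omega)
  unfold Afun
  refine sub_mem (add_mem (add_mem (sub_mem ?_ (Submodule.smul_mem _ _ ?_))
    (Submodule.smul_mem _ _ ?_)) ?_) ?_ <;>
    refine finsum_mem_submodule _ fun p => Submodule.smul_mem _ _ ?_
  · rw [sub_mul]
    exact sub_mem (hlower (qv_add_mul_pderiv_pderiv_mem _ _ hf))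
      (qv_mul_qv_mul_pderiv_pderiv_mem _ _ hf)
  · exact qv_mul_pderiv_mem p hf
  · exact hlower (qv_sub_one_mul_pderiv_mem p hf)
  · exact hlower (qv_mul_qv_mul_pderiv_mem p.1 p.2 hf)
  · exact qv_mul_pderiv_mem p hf

lemma qv_coe_eq_monomial (i : ℕ+) : qv (i : ℕ) = monomial (Finsupp.single i 1) 1 := by
  rw [qv, dif_pos i.pos]
  rfl

lemma pderiv_monomial_ne_zero {i : ℕ+} {d : ℕ+ →₀ ℕ} {r : ℝ}
    (h : pderiv i (monomial d r) ≠ 0) : d i ≠ 0 := by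
  rintro hi
  simp [pderiv_monomial, hi] at h

lemma qv_mul_pderiv_monomial (i : ℕ+) (d : ℕ+ →₀ ℕ) (r : ℝ) :
    qv (i : ℕ) * pderiv i (monomial d r) = (d i : ℝ) • monomial d r := by
  by_cases hi : d i = 0
  · simp [pderiv_monomial, hi]
  rw [qv_coe_eq_monomial, pderiv_monomial, monomial_mul, one_mul, smul_monomial, smul_eq_mul,
    mul_comm, add_tsub_cancel_of_le (Finsupp.single_le_iff.mpr (Nat.one_le_iff_ne_zero.mpr hi))]

lemma cast_tsub_single_apply_mul (d : ℕ+ →₀ ℕ) (i j : ℕ+) :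
    (((d - Finsupp.single j 1 : ℕ+ →₀ ℕ) i : ℕ) : ℝ) * d j
      = ((d i : ℝ) - if i = j then 1 else 0) * d j := by
  rw [Finsupp.tsub_apply]
  by_cases hij : i = j
  · subst hij
    rcases Nat.eq_zero_or_pos (d i) with hi | hi
    · simp [hi]
    · simp [Nat.cast_sub hi]
  · simp [hij, Finsupp.single_eq_of_ne hij]

lemma qv_mul_qv_mul_pderiv_pderiv_monomial (i j : ℕ+) (d : ℕ+ →₀ ℕ) (r : ℝ) :
    qv (i : ℕ) * qv (j : ℕ) * pderiv i (pderiv j (monomial d r))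
      = (((d i : ℝ) - if i = j then 1 else 0) * d j) • monomial d r := by
  have hj := qv_mul_pderiv_monomial j d r
  rw [pderiv_monomial] at hj ⊢
  rw [mul_comm (qv (i : ℕ)), mul_assoc, qv_mul_pderiv_monomial, mul_smul_comm, hj, smul_smul,
    cast_tsub_single_apply_mul]

lemma finsum_smul_qv_mul_pderiv_monomial (w : ℕ+ → ℝ) (d : ℕ+ →₀ ℕ) (r : ℝ) :
    ∑ᶠ i : ℕ+, w i • (qv (i : ℕ) * pderiv i (monomial d r))
      = (∑ i ∈ d.support, w i * d i) • monomial d r := by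
  simp_rw [qv_mul_pderiv_monomial, smul_smul]
  rw [finsum_eq_finsetSum_of_support_subset _ (s := d.support) fun i hi => ?_, Finset.sum_smul]
  simpa using fun h => hi (by simp [h])

lemma sum_weight_mul_pderiv_pderiv_coeff (d : ℕ+ →₀ ℕ) :
    ∑ p ∈ d.support ×ˢ d.support, (((p.1 : ℕ) : ℝ) + 1) * (((p.2 : ℕ) : ℝ) + 1) *
        (((d p.1 : ℝ) - if p.1 = p.2 then 1 else 0) * d p.2)
      = (wdeg d : ℝ) ^ 2 - ∑ i ∈ d.support, (((i : ℕ) : ℝ) + 1) ^ 2 * d i := by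
  rw [Finset.sum_product, cast_wdeg, sq, Finset.sum_mul_sum, ← Finset.sum_sub_distrib]
  refine Finset.sum_congr rfl fun i hi => ?_
  simp only [mul_sub, sub_mul, mul_ite, ite_mul, mul_zero, zero_mul,
    Finset.sum_sub_distrib, Finset.sum_ite_eq, hi, if_true]
  congr 1
  · exact Finset.sum_congr rfl fun j _ => by ring
  · ring

lemma pderiv_pderiv_monomial_ne_zero {i j : ℕ+} {d : ℕ+ →₀ ℕ} {r : ℝ}
    (h : pderiv i (pderiv j (monomial d r)) ≠ 0) : d i ≠ 0 ∧ d j ≠ 0 := by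
  have hj : d j ≠ 0 := pderiv_monomial_ne_zero fun h0 => h (by rw [h0, map_zero])
  rw [pderiv_monomial] at h
  have hi := pderiv_monomial_ne_zero h
  rw [Finsupp.tsub_apply] at hi
  exact ⟨by omega, hj⟩

lemma finsum_pderiv_pderiv_monomial_add_smul_mem (d : ℕ+ →₀ ℕ) (r : ℝ) :
    (∑ᶠ p : ℕ+ × ℕ+, ((((p.1 : ℕ) : ℝ) + 1) * (((p.2 : ℕ) : ℝ) + 1)) •
        ((qv ((p.1 : ℕ) + (p.2 : ℕ)) - qv (p.1 : ℕ) * qv (p.2 : ℕ)) *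
          pderiv p.1 (pderiv p.2 (monomial d r))))
      + ((wdeg d : ℝ) ^ 2 - ∑ i ∈ d.support, (((i : ℕ) : ℝ) + 1) ^ 2 * d i) •
          monomial d r
      ∈ wdegLE (wdeg d - 1) := by
  classical
  rw [finsum_eq_finsetSum_of_support_subset _ (s := d.support ×ˢ d.support) fun p hp => ?_]
  · simp_rw [sub_mul, smul_sub, Finset.sum_sub_distrib, qv_mul_qv_mul_pderiv_pderiv_monomial,
      smul_smul, ← Finset.sum_smul, sum_weight_mul_pderiv_pderiv_coeff, sub_add_cancel]
    exact Submodule.sum_mem _ fun p _ => Submodule.smul_mem _ _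
      (qv_add_mul_pderiv_pderiv_mem p.1 p.2 (monomial_mem_wdegLE d r))
  · have h : pderiv p.1 (pderiv p.2 (monomial d r)) ≠ 0 := fun h0 =>
      Function.mem_support.mp hp (by rw [h0, mul_zero, smul_zero])
    simpa using pderiv_pderiv_monomial_ne_zero h

theorem Afun_monomial_add_smul_mem (c s : ℝ) (d : ℕ+ →₀ ℕ) (r : ℝ) :
    Afun c s (monomial d r) + ((wdeg d : ℝ) * ((wdeg d : ℝ) - 1 + c)) • monomial d r
      ∈ wdegLE (wdeg d - 1) := by
  have hf := monomial_mem_wdegLE d r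
  have hsecond := finsum_pderiv_pderiv_monomial_add_smul_mem d r
  have hshift :
      ∑ᶠ i : ℕ+, (((i : ℕ) : ℝ) + 1) • (qv ((i : ℕ) - 1) * pderiv i (monomial d r))
      ∈ wdegLE (wdeg d - 1) :=
    finsum_mem_submodule _ fun i => Submodule.smul_mem _ _ (qv_sub_one_mul_pderiv_mem i hf)
  have hjoin : ∑ᶠ p : ℕ × ℕ, ((p.1 : ℝ) + (p.2 : ℝ) + 3) •
      (qv p.1 * qv p.2 * pderiv ((p.1 + p.2 + 2).toPNat (by omega)) (monomial d r))
      ∈ wdegLE (wdeg d - 1) :=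
    finsum_mem_submodule _ fun p => Submodule.smul_mem _ _ (qv_mul_qv_mul_pderiv_mem p.1 p.2 hf)
  have hcoeff : ∑ i ∈ d.support, ((i : ℕ) : ℝ) * (((i : ℕ) : ℝ) + 1) * d i
      = ∑ i ∈ d.support, (((i : ℕ) : ℝ) + 1) ^ 2 * d i - wdeg d := by
    rw [cast_wdeg, ← Finset.sum_sub_distrib]
    exact Finset.sum_congr rfl fun i _ => by ring
  rw [Afun, finsum_smul_qv_mul_pderiv_monomial, finsum_smul_qv_mul_pderiv_monomial, hcoeff,
    ← cast_wdeg]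
  convert add_mem (add_mem hsecond (Submodule.smul_mem _ s hshift)) hjoin using 1
  module

/-- If `f` is a monomial of weighted degree `m` then
`A f + m(m-1+c) f` has weighted degree strictly less than `m` (every monomial in it has
weighted degree `< m`); in particular `A` maps the subspace of polynomials of weighted
degree at most `m` into itself. -/
theorem Afun_triangular (c s : ℝ) (m : ℕ) :
    (∀ (d : ℕ+ →₀ ℕ) (r : ℝ), r ≠ 0 → wdeg d = m →
        ∀ e ∈ (Afun c s (MvPolynomial.monomial d r)
            + ((m : ℝ) * ((m : ℝ) - 1 + c)) • MvPolynomial.monomial d r).support,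
          wdeg e < m) ∧
      (∀ f : MvPolynomial ℕ+ ℝ, (∀ d ∈ f.support, wdeg d ≤ m) →
        ∀ e ∈ (Afun c s f).support, wdeg e ≤ m) := by
  refine ⟨fun d r _ hd e he => ?_, fun f hf e he => ?_⟩
  · subst hd
    have := mem_wdegLE.mp (Afun_monomial_add_smul_mem c s d r) e he
    omega
  · have hf' : f ∈ wdegLE m := mem_wdegLE.mpr fun d hd => Int.ofNat_le.mpr (hf d hd)
    exact Int.ofNat_le.mp (mem_wdegLE.mp (Afun_mem_wdegLE c s hf') e he)
end

section
/- Let λ be a Young diagram. Call a box b ∉ λ addable if λ ∪ {b} is a Young diagram, and a box b ∈ λ removable if λ ∖ {b} is a Young diagram. Then: (1) the number of addable boxes of λ exceeds the number of removable boxes by exactly 1; (2) ∑_{b addable} c(b) = ∑_{b removable} c(b); (3) ∑_{b addable} c(b)² = ∑_{b removable} c(b)² + 2|λ|, where c((i,j)) := j − i is the content of the box (i,j). -/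
/-- A box `b ∉ λ` is addable if adding it to `λ` again yields a Young diagram. -/
def YoungDiagram.IsAddable (μ : YoungDiagram) (b : ℕ × ℕ) : Prop :=
  b ∉ μ.cells ∧ ∃ ν : YoungDiagram, ν.cells = insert b μ.cells

/-- A box `b ∈ λ` is removable if deleting it from `λ` again yields a Young diagram. -/
def YoungDiagram.IsRemovable (μ : YoungDiagram) (b : ℕ × ℕ) : Prop :=
  b ∈ μ.cells ∧ ∃ ν : YoungDiagram, ν.cells = μ.cells.erase b

/-! Number the rows from `0` and write `λᵢ` for the length of row `i` and `ℓ` for the number of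
rows. The addable boxes are `(0, λ₀)` and `(i + 1, λᵢ₊₁)` for the corner rows `i`, those with
`λᵢ₊₁ < λᵢ`, and the removable boxes are the `(i, λᵢ - 1)` for the same corner rows; this gives
the count. With `xᵢ = λᵢ - i`, for every `g` the difference of the sums of `g ∘ c` over addable and
removable boxes is `g x₀ + ∑_{i corner} (g xᵢ₊₁ - g (xᵢ - 1))`. Outside the corner rows
`xᵢ₊₁ = xᵢ - 1`, so the sum extends over all rows `i < ℓ` and telescopes to
`g (-ℓ) + ∑_{i < ℓ} (g xᵢ - g (xᵢ - 1))`. For `g = id` this is `-ℓ + ℓ = 0`, and for `g = (·²)`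
it is `ℓ² + ∑_{i < ℓ} (2λᵢ - (2i + 1)) = 2|λ|`. -/

open Finset

namespace YoungDiagram

variable (μ : YoungDiagram)

theorem exists_cells_eq_insert_iff (b : ℕ × ℕ) :
    (∃ ν : YoungDiagram, ν.cells = insert b μ.cells) ↔ ∀ a < b, a ∈ μ := by
  constructor
  · rintro ⟨ν, hν⟩ a hab
    have ha : a ∈ ν.cells := ν.isLowerSet hab.le (by simp [hν])
    rw [hν, mem_insert] at ha
    exact ha.resolve_left hab.ne
  · intro h
    refine ⟨⟨insert b μ.cells, ?_⟩, rfl⟩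
    rintro a a' ha'a ha
    simp only [coe_insert, Set.mem_insert_iff, mem_coe, mem_cells] at ha ⊢
    rcases ha with rfl | ha
    · exact ha'a.eq_or_lt.imp id (h a')
    · exact .inr (μ.isLowerSet ha'a ha)

theorem exists_cells_eq_erase_iff (b : ℕ × ℕ) :
    (∃ ν : YoungDiagram, ν.cells = μ.cells.erase b) ↔ ∀ a ∈ μ, ¬b < a := by
  constructor
  · rintro ⟨ν, hν⟩ a ha hba
    have hb : b ∈ ν.cells := ν.isLowerSet hba.le (by simp [hν, hba.ne', ha])
    simp [hν] at hb
  · intro h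
    refine ⟨⟨μ.cells.erase b, ?_⟩, rfl⟩
    rintro a a' ha'a ha
    simp only [coe_erase, Set.mem_sdiff, mem_coe, mem_cells, Set.mem_singleton_iff] at ha ⊢
    refine ⟨μ.isLowerSet ha'a ha.1, ?_⟩
    rintro rfl
    exact h a ha.1 (ha'a.lt_of_ne' ha.2)

theorem forall_lt_mem_iff (i j : ℕ) :
    (∀ a < (i, j), a ∈ μ) ↔ (∀ k < i, (k, j) ∈ μ) ∧ j ≤ μ.rowLen i := by
  simp only [← forall_lt_iff_le, ← mem_iff_lt_rowLen]
  constructor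
  · exact fun h => ⟨fun k hk => h _ (Prod.lt_iff.2 (.inl ⟨hk, le_rfl⟩)),
      fun l hl => h _ (Prod.lt_iff.2 (.inr ⟨le_rfl, hl⟩))⟩
  · rintro ⟨hcol, hrow⟩ ⟨k, l⟩ hlt
    rcases Prod.lt_iff.1 hlt with ⟨hk, hl⟩ | ⟨hk, hl⟩
    · exact μ.up_left_mem le_rfl hl (hcol k hk)
    · exact μ.up_left_mem hk le_rfl (hrow hl)

theorem forall_not_lt_iff (i j : ℕ) :
    (∀ a ∈ μ, ¬(i, j) < a) ↔ (i + 1, j) ∉ μ ∧ (i, j + 1) ∉ μ := by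
  constructor
  · exact fun h => ⟨fun hm => h _ hm (Prod.lt_iff.2 (.inl ⟨i.lt_succ_self, le_rfl⟩)),
      fun hm => h _ hm (Prod.lt_iff.2 (.inr ⟨le_rfl, j.lt_succ_self⟩))⟩
  · rintro ⟨hdown, hright⟩ ⟨k, l⟩ hm hlt
    rcases Prod.lt_iff.1 hlt with ⟨hk, hl⟩ | ⟨hk, hl⟩
    · exact hdown (μ.up_left_mem hk hl hm)
    · exact hright (μ.up_left_mem hk hl hm)

theorem isAddable_zero_iff (j : ℕ) : μ.IsAddable (0, j) ↔ j = μ.rowLen 0 := by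
  simp only [IsAddable, exists_cells_eq_insert_iff, forall_lt_mem_iff, mem_cells,
    mem_iff_lt_rowLen, Nat.not_lt_zero, IsEmpty.forall_iff, implies_true, true_and]
  omega

theorem isAddable_succ_iff (i j : ℕ) :
    μ.IsAddable (i + 1, j) ↔ j = μ.rowLen (i + 1) ∧ μ.rowLen (i + 1) < μ.rowLen i := by
  have hcol : (∀ k < i + 1, (k, j) ∈ μ) ↔ (i, j) ∈ μ :=
    ⟨fun h => h i i.lt_succ_self, fun h _ hk => μ.up_left_mem (Nat.le_of_lt_succ hk) le_rfl h⟩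
  rw [IsAddable, exists_cells_eq_insert_iff, forall_lt_mem_iff, hcol, mem_cells]
  simp only [mem_iff_lt_rowLen]
  omega

theorem isRemovable_iff (i j : ℕ) :
    μ.IsRemovable (i, j) ↔ j + 1 = μ.rowLen i ∧ μ.rowLen (i + 1) < μ.rowLen i := by
  simp only [IsRemovable, exists_cells_eq_erase_iff, forall_not_lt_iff, mem_cells,
    mem_iff_lt_rowLen]
  omega

def cornerRows : Finset ℕ :=
  (range (μ.colLen 0)).filter fun i => μ.rowLen (i + 1) < μ.rowLen i

theorem mem_cornerRows {i : ℕ} : i ∈ μ.cornerRows ↔ μ.rowLen (i + 1) < μ.rowLen i := by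
  rw [cornerRows, mem_filter, mem_range, and_iff_right_iff_imp, ← mem_iff_lt_colLen,
    mem_iff_lt_rowLen]
  omega

theorem setOf_isAddable : {b | μ.IsAddable b} =
    ↑(insert (0, μ.rowLen 0) (μ.cornerRows.image fun i => (i + 1, μ.rowLen (i + 1)))) := by
  ext ⟨_ | i, j⟩ <;>
    simp [isAddable_zero_iff, isAddable_succ_iff, mem_cornerRows, and_comm, eq_comm]

theorem setOf_isRemovable :
    {b | μ.IsRemovable b} = ↑(μ.cornerRows.image fun i => (i, μ.rowLen i - 1)) := by
  ext ⟨i, j⟩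
  simp only [Set.mem_ofPred_eq, isRemovable_iff, coe_image, Set.mem_image, mem_coe,
    mem_cornerRows, Prod.mk.injEq]
  constructor
  · exact fun h => ⟨i, h.2, rfl, by omega⟩
  · rintro ⟨i, h, rfl, rfl⟩
    omega

theorem ncard_setOf_isAddable : {b | μ.IsAddable b}.ncard = μ.cornerRows.card + 1 := by
  rw [setOf_isAddable, Set.ncard_coe_finset, card_insert_of_notMem (by simp),
    card_image_of_injective _ fun i k h => by simpa using congrArg Prod.fst h]

theorem ncard_setOf_isRemovable : {b | μ.IsRemovable b}.ncard = μ.cornerRows.card := by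
  rw [setOf_isRemovable, Set.ncard_coe_finset,
    card_image_of_injective _ fun i k h => congrArg Prod.fst h]

theorem card_eq_sum_rowLen : μ.card = ∑ i ∈ range (μ.colLen 0), μ.rowLen i := by
  refine (card_eq_sum_card_fiberwise fun c hc => ?_).trans
    (sum_congr rfl fun i _ => (μ.rowLen_eq_card).symm)
  rw [mem_coe, mem_range, ← mem_iff_lt_colLen]
  exact μ.up_left_mem le_rfl (Nat.zero_le _) ((mem_cells c).1 hc)

theorem rowLen_colLen_zero : μ.rowLen (μ.colLen 0) = 0 := by
  rw [← Nat.le_zero, ← not_lt, ← mem_iff_lt_rowLen, mem_iff_lt_colLen]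
  exact lt_irrefl _

variable {M : Type*} [AddCommGroup M]

theorem finsum_isAddable_sub_finsum_isRemovable (g : ℤ → M) :
    ∑ᶠ b ∈ {b | μ.IsAddable b}, g ((b.2 : ℤ) - b.1)
        - ∑ᶠ b ∈ {b | μ.IsRemovable b}, g ((b.2 : ℤ) - b.1)
      = g (-μ.colLen 0) +
          ∑ i ∈ range (μ.colLen 0), (g ((μ.rowLen i : ℤ) - i) - g ((μ.rowLen i : ℤ) - i - 1)) := by
  set x : ℕ → ℤ := fun i => (μ.rowLen i : ℤ) - i
  have hcorner : ∑ i ∈ μ.cornerRows, (g (x (i + 1)) - g (x i - 1))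
      = ∑ i ∈ range (μ.colLen 0), (g (x (i + 1)) - g (x i - 1)) := by
    refine sum_filter_of_ne fun i _ hne => lt_of_le_of_ne (μ.rowLen_anti _ _ i.le_succ) ?_
    intro heq
    have hx : x (i + 1) = x i - 1 := by simp only [x, heq]; push_cast; ring
    exact hne (by rw [hx, sub_self])
  have hA : ∑ᶠ b ∈ {b | μ.IsAddable b}, g ((b.2 : ℤ) - b.1)
      = g (x 0) + ∑ i ∈ μ.cornerRows, g (x (i + 1)) := by
    rw [setOf_isAddable, finsum_mem_coe_finset, sum_insert (by simp),
      sum_image fun i _ k _ h => by simpa using congrArg Prod.fst h]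
  have hR : ∑ᶠ b ∈ {b | μ.IsRemovable b}, g ((b.2 : ℤ) - b.1)
      = ∑ i ∈ μ.cornerRows, g (x i - 1) := by
    rw [setOf_isRemovable, finsum_mem_coe_finset,
      sum_image fun i _ k _ h => congrArg Prod.fst h]
    refine sum_congr rfl fun i hi => ?_
    have : 0 < μ.rowLen i := (Nat.zero_le _).trans_lt ((μ.mem_cornerRows).1 hi)
    congr 1
    simp only [x]
    omega
  have hsplit : ∑ i ∈ range (μ.colLen 0), (g (x (i + 1)) - g (x i - 1))
      = (g (x (μ.colLen 0)) - g (x 0)) + ∑ i ∈ range (μ.colLen 0), (g (x i) - g (x i - 1)) := by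
    rw [← sum_range_sub (fun i => g (x i)), ← sum_add_distrib]
    simp only [sub_add_sub_cancel]
  have hlast : x (μ.colLen 0) = -μ.colLen 0 := by simp [x, rowLen_colLen_zero]
  rw [hA, hR, add_sub_assoc, ← sum_sub_distrib, hcorner, hsplit, hlast]
  abel

end YoungDiagram

/-- For any Young diagram `λ`: the number of addable boxes exceeds the
number of removable boxes by 1; the sums of the contents `c(b) = j - i` over addable
and removable boxes agree; and the sums of the squared contents differ by `2|λ|`. -/
theorem addable_removable_contents (μ : YoungDiagram) :
    ({b : ℕ × ℕ | μ.IsAddable b}.ncard = {b : ℕ × ℕ | μ.IsRemovable b}.ncard + 1) ∧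
      ((∑ᶠ b ∈ {b : ℕ × ℕ | μ.IsAddable b}, ((b.2 : ℤ) - (b.1 : ℤ)))
          = ∑ᶠ b ∈ {b : ℕ × ℕ | μ.IsRemovable b}, ((b.2 : ℤ) - (b.1 : ℤ))) ∧
      ((∑ᶠ b ∈ {b : ℕ × ℕ | μ.IsAddable b}, ((b.2 : ℤ) - (b.1 : ℤ)) ^ 2)
          = (∑ᶠ b ∈ {b : ℕ × ℕ | μ.IsRemovable b}, ((b.2 : ℤ) - (b.1 : ℤ)) ^ 2)
            + 2 * (μ.card : ℤ)) := by
  refine ⟨by rw [μ.ncard_setOf_isAddable, μ.ncard_setOf_isRemovable], ?_, ?_⟩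
  · have key := μ.finsum_isAddable_sub_finsum_isRemovable fun c : ℤ => c
    simpa [sub_eq_zero] using key
  · have key := μ.finsum_isAddable_sub_finsum_isRemovable fun c : ℤ => c ^ 2
    rw [← sub_eq_iff_eq_add', key]
    have hrow (i : ℕ) : ((μ.rowLen i : ℤ) - i) ^ 2 - ((μ.rowLen i : ℤ) - i - 1) ^ 2
        = 2 * μ.rowLen i - (((i + 1 : ℕ) : ℤ) ^ 2 - (i : ℤ) ^ 2) := by
      push_cast; ring
    simp only [hrow, sum_sub_distrib, ← mul_sum, sum_range_sub (fun i : ℕ => (i : ℤ) ^ 2),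
      μ.card_eq_sum_rowLen]
    push_cast
    ring
end

section
/- Let k, l be positive integers and take z = k, z' = −l in the definition of the operators E, F, H below. Then the finite-dimensional subspace V_{k,l} of V spanned by the basis vectors δ_λ with λ contained in the k×l rectangle (i.e. λ has at most k rows and at most l columns) is invariant under each of E, F, and H. -/
/-- The space of finitely supported complex functions on the set of all Young diagrams,
with basis `{δ_λ}` (`δ_λ = Finsupp.single λ 1`). -/
abbrev YDSpace : Type := YoungDiagram →₀ ℂ

open YoungDiagram in
/-- The operator `E`: `E δ_λ = ∑_{ν ↘ λ} (z)_{ν/λ}(z')_{ν/λ} δ_ν`, extended linearly. -/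
noncomputable def Eop (z z' : ℂ) : YDSpace →ₗ[ℂ] YDSpace :=
  Finsupp.lsum ℂ fun l => LinearMap.toSpanSingleton ℂ YDSpace
    (∑ᶠ (ν : YoungDiagram) (_ : Covers l ν),
      (poch z l ν * poch z' l ν) • Finsupp.single ν (1 : ℂ))

open YoungDiagram in
/-- The operator `F`: `F δ_λ = -∑_{μ ↗ λ} δ_μ`, extended linearly. -/
noncomputable def Fop : YDSpace →ₗ[ℂ] YDSpace :=
  Finsupp.lsum ℂ fun l => LinearMap.toSpanSingleton ℂ YDSpace
    (-∑ᶠ (μ : YoungDiagram) (_ : Covers μ l), Finsupp.single μ (1 : ℂ))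

/-- The operator `H`: `H δ_λ = (zz' + 2|λ|) δ_λ`, extended linearly. -/
noncomputable def Hop (z z' : ℂ) : YDSpace →ₗ[ℂ] YDSpace :=
  Finsupp.lsum ℂ fun l => LinearMap.toSpanSingleton ℂ YDSpace
    ((z * z' + 2 * (l.card : ℂ)) • Finsupp.single l (1 : ℂ))

/-!
Each of `E`, `F`, `H` sends `δ_μ` to a combination of `δ_ν` with `ν` obtained from `μ` by
adding or removing at most one box. `H` is diagonal and removing a box never leaves the
rectangle, so only `E` needs an argument: if `μ` fits in the `k × l` rectangle but `μ ↗ ν`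
does not, the added box is forced to be `(k, 0)` or `(0, l)` (in the 0-indexed coordinates
of `YoungDiagram`), whose content `j - i` is `-k` resp. `l`. Hence the coefficient
`(k)_{ν/μ} (-l)_{ν/μ}` of `δ_ν` vanishes.
-/

open YoungDiagram

namespace YoungDiagram

def InRectangle (k l : ℕ) (μ : YoungDiagram) : Prop :=
  ∀ b ∈ μ.cells, b.1 < k ∧ b.2 < l

theorem isLowerSet_setOf_inRectangle (k l : ℕ) :
    IsLowerSet {μ : YoungDiagram | μ.InRectangle k l} :=
  fun _ _ hμν hν b hb => hν b (hμν hb)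

theorem Covers.exists_cells_sdiff_eq_singleton {μ ν : YoungDiagram} (h : Covers μ ν) :
    ∃ b, ν.cells \ μ.cells = {b} :=
  Finset.card_eq_one.1 <| (Finset.card_sdiff_of_subset h.1).trans (Nat.sub_eq_of_eq_add' h.2)

theorem poch_eq_of_cells_sdiff_eq_singleton {μ ν : YoungDiagram} {b : ℕ × ℕ}
    (h : ν.cells \ μ.cells = {b}) (w : ℂ) : poch w μ ν = w + b.2 - b.1 := by
  rw [poch, h, Finset.prod_singleton]

theorem poch_mul_poch_eq_zero_of_covers {k l : ℕ} {μ ν : YoungDiagram}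
    (hμ : μ.InRectangle k l) (hμν : Covers μ ν) (hν : ¬ν.InRectangle k l) :
    poch k μ ν * poch (-l) μ ν = 0 := by
  obtain ⟨b, hb⟩ := hμν.exists_cells_sdiff_eq_singleton
  have eq_b : ∀ c ∈ ν, ¬(c.1 < k ∧ c.2 < l) → c = b := fun c hcν hc =>
    Finset.mem_singleton.1 <| hb ▸ Finset.mem_sdiff.2 ⟨hcν, fun hcμ => hc (hμ c hcμ)⟩
  simp only [InRectangle, not_forall, mem_cells] at hν
  obtain ⟨⟨i, j⟩, hij, hout⟩ := hν
  rw [poch_eq_of_cells_sdiff_eq_singleton hb, poch_eq_of_cells_sdiff_eq_singleton hb]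
  rcases Nat.lt_or_ge i k with hi | hi
  · have hj : l ≤ j := by omega
    rw [← eq_b (0, l) (ν.up_left_mem (Nat.zero_le i) hj hij) (by simp)]
    simp
  · rw [← eq_b (k, 0) (ν.up_left_mem hi (Nat.zero_le j) hij) (by simp)]
    simp

end YoungDiagram

theorem Finsupp.lsum_toSpanSingleton_single {R M α : Type*} [CommSemiring R] [AddCommMonoid M]
    [Module R M] (x : α → M) (a : α) :
    Finsupp.lsum R (fun b => LinearMap.toSpanSingleton R M (x b)) (Finsupp.single a 1) = x a := by
  rw [Finsupp.lsum_single, LinearMap.toSpanSingleton_apply, one_smul]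

section Operators

variable (z z' : ℂ) (μ : YoungDiagram)

theorem Eop_single : Eop z z' (Finsupp.single μ 1) =
    ∑ᶠ (ν : YoungDiagram) (_ : Covers μ ν),
      (poch z μ ν * poch z' μ ν) • Finsupp.single ν 1 :=
  Finsupp.lsum_toSpanSingleton_single _ μ

theorem Fop_single : Fop (Finsupp.single μ 1) =
    -∑ᶠ (ν : YoungDiagram) (_ : Covers ν μ), Finsupp.single ν (1 : ℂ) :=
  Finsupp.lsum_toSpanSingleton_single _ μ

theorem Hop_single : Hop z z' (Finsupp.single μ 1) =
    (z * z' + 2 * (μ.card : ℂ)) • Finsupp.single μ 1 :=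
  Finsupp.lsum_toSpanSingleton_single _ μ

end Operators

theorem Submodule.finsum_mem {R M : Type*} [Semiring R] [AddCommMonoid M] [Module R M]
    (p : Submodule R M) {ι : Sort*} {f : ι → M} (h : ∀ i, f i ∈ p) : ∑ᶠ i, f i ∈ p :=
  finsum_induction (· ∈ p) p.zero_mem (fun _ _ => p.add_mem) h

noncomputable def basisSpan (s : Set YoungDiagram) : Submodule ℂ YDSpace :=
  Submodule.span ℂ {v | ∃ μ ∈ s, v = Finsupp.single μ 1}

namespace basisSpan

open Set

variable {s : Set YoungDiagram}

theorem single_mem {μ : YoungDiagram} (hμ : μ ∈ s) : Finsupp.single μ 1 ∈ basisSpan s :=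
  Submodule.subset_span ⟨μ, hμ, rfl⟩

theorem mapsTo_of_forall_single {T : YDSpace →ₗ[ℂ] YDSpace}
    (hT : ∀ μ ∈ s, T (Finsupp.single μ 1) ∈ basisSpan s) :
    MapsTo T (basisSpan s) (basisSpan s) :=
  fun _ hv => Submodule.span_le (p := (basisSpan s).comap T).2
    (by rintro _ ⟨μ, hμ, rfl⟩; exact hT μ hμ) hv

theorem mapsTo_Hop (z z' : ℂ) : MapsTo (Hop z z') (basisSpan s) (basisSpan s) :=
  mapsTo_of_forall_single fun μ hμ => by
    rw [Hop_single]
    exact Submodule.smul_mem _ _ (single_mem hμ)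

theorem mapsTo_Fop (hs : IsLowerSet s) : MapsTo Fop (basisSpan s) (basisSpan s) :=
  mapsTo_of_forall_single fun μ hμ => by
    rw [Fop_single]
    exact Submodule.neg_mem _ <| Submodule.finsum_mem _ fun _ =>
      Submodule.finsum_mem _ fun hνμ => single_mem (hs hνμ.1 hμ)

theorem mapsTo_Eop_rectangle (k l : ℕ) :
    MapsTo (Eop k (-l)) (basisSpan {μ | μ.InRectangle k l})
      (basisSpan {μ | μ.InRectangle k l}) :=
  mapsTo_of_forall_single fun μ hμ => by
    rw [Eop_single]
    refine Submodule.finsum_mem _ fun ν => Submodule.finsum_mem _ fun hμν => ?_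
    by_cases hν : ν.InRectangle k l
    · exact Submodule.smul_mem _ _ (single_mem hν)
    · rw [poch_mul_poch_eq_zero_of_covers hμ hμν hν, zero_smul]
      exact Submodule.zero_mem _

end basisSpan

theorem rectangle_subspace_invariant_general (k l : ℕ) :
    ∀ W : Submodule ℂ YDSpace,
      W = Submodule.span ℂ {v : YDSpace | ∃ μ : YoungDiagram,
          (∀ b ∈ μ.cells, b.1 < k ∧ b.2 < l) ∧ v = Finsupp.single μ 1} →
      (∀ v ∈ W, Eop (k : ℂ) (-(l : ℂ)) v ∈ W) ∧
        (∀ v ∈ W, Fop v ∈ W) ∧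
        (∀ v ∈ W, Hop (k : ℂ) (-(l : ℂ)) v ∈ W) := by
  rintro W rfl
  exact ⟨basisSpan.mapsTo_Eop_rectangle k l,
    basisSpan.mapsTo_Fop (isLowerSet_setOf_inRectangle k l), basisSpan.mapsTo_Hop _ _⟩

/-- For `z = k`, `z' = -l` (`k, l` positive integers), the subspace
`V_{k,l}` spanned by the vectors `δ_λ` with `λ` contained in the `k × l` rectangle
(at most `k` rows and at most `l` columns) is invariant under `E`, `F` and `H`. -/
theorem rectangle_subspace_invariant (k l : ℕ) (hk : 0 < k) (hl : 0 < l) :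
    ∀ W : Submodule ℂ YDSpace,
      W = Submodule.span ℂ {v : YDSpace | ∃ μ : YoungDiagram,
          (∀ b ∈ μ.cells, b.1 < k ∧ b.2 < l) ∧ v = Finsupp.single μ 1} →
      (∀ v ∈ W, Eop (k : ℂ) (-(l : ℂ)) v ∈ W) ∧
        (∀ v ∈ W, Fop v ∈ W) ∧
        (∀ v ∈ W, Hop (k : ℂ) (-(l : ℂ)) v ∈ W) :=
  rectangle_subspace_invariant_general k l
end
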